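/- Fix λ > 0. The log-sum penalty ρ : ℝ → ℝ defined by ρ(t) = log(1 + λ|t|) is λ²-amenable; in particular, for t > 0 one has ρ'(t) = λ/(1 + λt) and ρ''(t) = −λ²/(1 + λt)². -/

import Mathlib

open scoped BigOperators

/-- A function `ρ : ℝ → ℝ` is `μ`-amenable (with selection parameter `lam > 0`):
(i) symmetric around zero with `ρ 0 = 0`; (ii) nondecreasing on `[0, ∞)`;
(iii) `t ↦ ρ t / t` nonincreasing on `(0, ∞)`; (iv) differentiable away from `0`;
(v) `t ↦ ρ t + μ/2 t²` convex; (vi) `ρ'(t) → lam` as `t → 0⁺`. -/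
structure Amenable (lam mu : ℝ) (ρ : ℝ → ℝ) : Prop where
  symm : ∀ t : ℝ, ρ (-t) = ρ t
  zero : ρ 0 = 0
  mono : MonotoneOn ρ (Set.Ici (0 : ℝ))
  ratio : AntitoneOn (fun t => ρ t / t) (Set.Ioi (0 : ℝ))
  diff : ∀ t : ℝ, t ≠ 0 → DifferentiableAt ℝ ρ t
  conv : ConvexOn ℝ Set.univ (fun t => ρ t + mu / 2 * t ^ 2)
  deriv_lim : Filter.Tendsto (deriv ρ) (nhdsWithin 0 (Set.Ioi 0)) (nhds lam)

/-!
Write `ρ = g ∘ |·|` with `g s = log (1 + λ s)`. Every amenability axiom for `ρ` reduces to a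
property of `g` on `[0, ∞)`: `g` is increasing, concave with `g 0 = 0` (so `g s / s` decreases),
smooth, with `g' s = λ / (1 + λ s) → λ` as `s → 0⁺`, and `g s + λ²/2 s²` is increasing and convex
since its second derivative `λ² - λ² / (1 + λ s)²` is nonnegative. Convexity transfers from
`[0, ∞)` to `ℝ` because `|·|` is convex and the outer function is increasing on its range.
-/

open Real Set Filter Topology

section CompAbs

variable {g : ℝ → ℝ}

theorem ConcaveOn.antitoneOn_div_of_map_zero (hg : ConcaveOn ℝ (Ici 0) g) (h0 : g 0 = 0) :
    AntitoneOn (fun t => g t / t) (Ioi 0) := by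
  intro x hx y hy hxy
  have hsecant := hg.neg.secant_mono self_mem_Ici (Ioi_subset_Ici_self hx)
    (Ioi_subset_Ici_self hy) hx.ne' hy.ne' hxy
  simp only [Pi.neg_apply, h0, neg_zero, sub_zero, neg_div] at hsecant
  exact neg_le_neg_iff.mp hsecant

theorem ConvexOn.comp_abs (hg : ConvexOn ℝ (Ici 0) g) (hmono : MonotoneOn g (Ici 0)) :
    ConvexOn ℝ univ (fun t => g |t|) := by
  have himage : (fun t : ℝ => |t|) '' univ = Ici 0 := by
    ext x
    exact ⟨by rintro ⟨y, -, rfl⟩; exact abs_nonneg y, fun hx => ⟨x, trivial, abs_of_nonneg hx⟩⟩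
  exact (himage ▸ hg).comp (convexOn_univ_norm (E := ℝ)) (himage ▸ hmono)

theorem deriv_comp_abs_of_pos {t : ℝ} (ht : 0 < t) : deriv (fun s => g |s|) t = deriv g t := by
  refine Filter.EventuallyEq.deriv_eq ?_
  filter_upwards [eventually_gt_nhds ht] with s hs using congrArg g (abs_of_pos hs)

theorem eventuallyEq_deriv_comp_abs_of_pos {t : ℝ} (ht : 0 < t) :
    deriv (fun s => g |s|) =ᶠ[𝓝 t] deriv g := by
  filter_upwards [eventually_gt_nhds ht] with s hs using deriv_comp_abs_of_pos hs

theorem amenable_comp_abs {lam mu : ℝ} (hmu : 0 ≤ mu) (h0 : g 0 = 0)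
    (hmono : MonotoneOn g (Ici 0)) (hconc : ConcaveOn ℝ (Ici 0) g)
    (hdiff : ∀ s, 0 < s → DifferentiableAt ℝ g s)
    (hconv : ConvexOn ℝ (Ici 0) (fun s => g s + mu / 2 * s ^ 2))
    (hlim : Tendsto (deriv g) (𝓝[>] 0) (𝓝 lam)) :
    Amenable lam mu (fun t => g |t|) where
  symm t := by simp only [abs_neg]
  zero := by simp only [abs_zero, h0]
  mono := hmono.congr fun t ht => by simp only [abs_of_nonneg (mem_Ici.mp ht)]
  ratio := (hconc.antitoneOn_div_of_map_zero h0).congr fun t ht => by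
    simp only [abs_of_pos (mem_Ioi.mp ht)]
  diff t ht := (hdiff |t| (abs_pos.mpr ht)).comp t (differentiableAt_abs ht)
  conv := by
    have hsq_mono : MonotoneOn (fun s : ℝ => mu / 2 * s ^ 2) (Ici 0) := fun a ha b _ hab =>
      mul_le_mul_of_nonneg_left (pow_le_pow_left₀ ha hab 2) (by positivity)
    simpa only [sq_abs] using hconv.comp_abs (hmono.add hsq_mono)
  deriv_lim := (tendsto_congr' (eventually_nhdsWithin_of_forall
    fun _ ht => deriv_comp_abs_of_pos (mem_Ioi.mp ht))).mpr hlim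

end CompAbs

section LogOneAddMul

variable {c : ℝ}

theorem hasDerivAt_log_one_add_mul {t : ℝ} (h : 1 + c * t ≠ 0) :
    HasDerivAt (fun s => log (1 + c * s)) (c / (1 + c * t)) t := by
  simpa using (((hasDerivAt_id t).const_mul c).const_add 1).log h

theorem hasDerivAt_div_one_add_mul {t : ℝ} (h : 1 + c * t ≠ 0) :
    HasDerivAt (fun s => c / (1 + c * s)) (-c ^ 2 / (1 + c * t) ^ 2) t :=
  ((hasDerivAt_const t c).div (((hasDerivAt_id' t).const_mul c).const_add 1) h).congr_deriv
    (by ring)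

theorem monotoneOn_log_one_add_mul (hc : 0 ≤ c) :
    MonotoneOn (fun s => log (1 + c * s)) (Ici 0) := fun a ha _ _ hab =>
  log_le_log (by have := mem_Ici.mp ha; positivity) (by gcongr)

theorem continuousOn_log_one_add_mul (hc : 0 ≤ c) :
    ContinuousOn (fun s => log (1 + c * s)) (Ici 0) :=
  ContinuousOn.log (by fun_prop) fun s hs => by have := mem_Ici.mp hs; positivity

theorem concaveOn_log_one_add_mul (hc : 0 ≤ c) :
    ConcaveOn ℝ (Ici 0) (fun s => log (1 + c * s)) := by
  have hne : ∀ s ∈ interior (Ici (0 : ℝ)), 1 + c * s ≠ 0 := fun s hs => by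
    rw [interior_Ici] at hs; have := mem_Ioi.mp hs; positivity
  exact concaveOn_of_hasDerivWithinAt2_nonpos (convex_Ici 0) (continuousOn_log_one_add_mul hc)
    (fun s hs => (hasDerivAt_log_one_add_mul (hne s hs)).hasDerivWithinAt)
    (fun s hs => (hasDerivAt_div_one_add_mul (hne s hs)).hasDerivWithinAt)
    (fun s _ => div_nonpos_of_nonpos_of_nonneg (neg_nonpos.mpr (sq_nonneg c)) (sq_nonneg _))

theorem convexOn_log_one_add_mul_add_sq (hc : 0 ≤ c) :
    ConvexOn ℝ (Ici 0) (fun s => log (1 + c * s) + c ^ 2 / 2 * s ^ 2) := by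
  have hge : ∀ s ∈ interior (Ici (0 : ℝ)), 1 ≤ 1 + c * s := fun s hs => by
    rw [interior_Ici] at hs; have := mem_Ioi.mp hs; nlinarith
  have hne : ∀ s ∈ interior (Ici (0 : ℝ)), 1 + c * s ≠ 0 := fun s hs => by
    linarith [hge s hs]
  refine convexOn_of_hasDerivWithinAt2_nonneg (convex_Ici 0)
    ((continuousOn_log_one_add_mul hc).add (by fun_prop))
    (f' := fun s => c / (1 + c * s) + c ^ 2 * s)
    (f'' := fun s => -c ^ 2 / (1 + c * s) ^ 2 + c ^ 2)
    (fun s hs => ?_) (fun s hs => ?_) (fun s hs => ?_)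
  · have hsq : HasDerivAt (fun s => c ^ 2 / 2 * s ^ 2) (c ^ 2 * s) s :=
      ((hasDerivAt_pow 2 s).const_mul (c ^ 2 / 2)).congr_deriv (by ring)
    exact ((hasDerivAt_log_one_add_mul (hne s hs)).add hsq).hasDerivWithinAt
  · have hlin : HasDerivAt (fun s => c ^ 2 * s) (c ^ 2) s :=
      ((hasDerivAt_id' s).const_mul (c ^ 2)).congr_deriv (mul_one _)
    exact ((hasDerivAt_div_one_add_mul (hne s hs)).add hlin).hasDerivWithinAt
  · have hle : c ^ 2 / (1 + c * s) ^ 2 ≤ c ^ 2 :=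
      div_le_self (sq_nonneg c) (one_le_pow₀ (hge s hs))
    rw [neg_div]
    linarith

end LogOneAddMul

/-- the log-sum penalty `ρ(t) = log(1 + λ|t|)` is `λ²`-amenable; moreover for
`t > 0`, `ρ'(t) = λ/(1 + λt)` and `ρ''(t) = −λ²/(1 + λt)²`. -/
theorem lsp_amenable (lam : ℝ) (hlam : 0 < lam) :
    Amenable lam (lam ^ 2) (fun t => Real.log (1 + lam * |t|)) ∧
    (∀ t : ℝ, 0 < t →
      deriv (fun t => Real.log (1 + lam * |t|)) t = lam / (1 + lam * t) ∧
      deriv (deriv (fun t => Real.log (1 + lam * |t|))) t = -lam ^ 2 / (1 + lam * t) ^ 2) := by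
  have hne : ∀ t : ℝ, 0 < t → 1 + lam * t ≠ 0 := fun t ht => by positivity
  have hderiv : ∀ t : ℝ, 0 < t → deriv (fun s => log (1 + lam * s)) t = lam / (1 + lam * t) :=
    fun t ht => (hasDerivAt_log_one_add_mul (hne t ht)).deriv
  have hlim : Tendsto (deriv fun s => log (1 + lam * s)) (𝓝[>] 0) (𝓝 lam) := by
    have hcont : ContinuousAt (fun t : ℝ => lam / (1 + lam * t)) 0 :=
      ContinuousAt.div (by fun_prop) (by fun_prop) (by norm_num)
    refine (tendsto_congr' (eventually_nhdsWithin_of_forall fun t ht => hderiv t ht)).mpr ?_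
    simpa using hcont.tendsto.mono_left nhdsWithin_le_nhds
  refine ⟨amenable_comp_abs (sq_nonneg lam) (by simp) (monotoneOn_log_one_add_mul hlam.le)
    (concaveOn_log_one_add_mul hlam.le)
    (fun s hs => (hasDerivAt_log_one_add_mul (hne s hs)).differentiableAt)
    (convexOn_log_one_add_mul_add_sq hlam.le) hlim, fun t ht => ⟨?_, ?_⟩⟩
  · exact (deriv_comp_abs_of_pos (g := fun s => log (1 + lam * s)) ht).trans (hderiv t ht)
  · have hderiv_near :
        deriv (fun s => log (1 + lam * s)) =ᶠ[𝓝 t] fun s => lam / (1 + lam * s) := by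
      filter_upwards [eventually_gt_nhds ht] with s hs using hderiv s hs
    exact ((eventuallyEq_deriv_comp_abs_of_pos ht).trans hderiv_near).deriv_eq.trans
      (hasDerivAt_div_one_add_mul (hne t ht)).deriv
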